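/- arXiv:0811.2117 — 11 statements merged into one kernel-verified Lean document; each statement's English description precedes it below -/
import Mathlib

section
/- For any disjunctive database D (a finite set of non-empty finite sets of facts, each set interpreted as a disjunction), the minimal models of D coincide with the minimal models of reduction(D), where reduction(D) removes every disjunction that properly contains (as a set of facts) another disjunction of D. -/
/-! Every disjunction of `D` contains an inclusion-minimal one, and the minimal disjunctions are
exactly those kept by `reduction`. A set of facts meeting a minimal disjunction meets every
disjunction above it, so `D` and `reduction D` have the same models, hence the same minimal
models. -/

variable {F : Type*} [DecidableEq F]

/-- M is a model of the disjunctive database D: it meets every disjunction. -/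
def IsModel (D : Finset (Finset F)) (M : Finset F) : Prop :=
  ∀ d ∈ D, ∃ t ∈ d, t ∈ M

/-- M is a minimal model of D. -/
def IsMinModel (D : Finset (Finset F)) (M : Finset F) : Prop :=
  IsModel D M ∧ ∀ M' ⊂ M, ¬ IsModel D M'

/-- reduction removes every disjunction properly containing another disjunction of D. -/
def reduction (D : Finset (Finset F)) : Finset (Finset F) :=
  D.filter (fun d => ∀ d' ∈ D, ¬ d' ⊂ d)

theorem mem_reduction_iff {D : Finset (Finset F)} {d : Finset F} :
    d ∈ reduction D ↔ Minimal (· ∈ D) d := by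
  simp only [reduction, Finset.mem_filter, minimal_iff_forall_lt]
  exact and_congr_right fun _ => ⟨fun h d' hd' hd'D => h d' hd'D hd', fun h d' hd'D hd' => h hd' hd'D⟩

theorem exists_mem_reduction_subset {D : Finset (Finset F)} {d : Finset F} (hd : d ∈ D) :
    ∃ d' ∈ reduction D, d' ⊆ d := by
  obtain ⟨d', hd'd, hd'⟩ := D.finite_toSet.isPWO.exists_le_minimal hd
  exact ⟨d', mem_reduction_iff.2 hd', hd'd⟩

theorem isModel_reduction_iff {D : Finset (Finset F)} {M : Finset F} :
    IsModel (reduction D) M ↔ IsModel D M := by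
  refine ⟨fun h d hd => ?_, fun h d hd => h d (Finset.filter_subset _ D hd)⟩
  obtain ⟨d', hd', hd'd⟩ := exists_mem_reduction_subset hd
  obtain ⟨t, ht, htM⟩ := h d' hd'
  exact ⟨t, hd'd ht, htM⟩

theorem stmt0_general (D : Finset (Finset F)) :
    ∀ M : Finset F, IsMinModel D M ↔ IsMinModel (reduction D) M := by
  intro M
  simp only [IsMinModel, isModel_reduction_iff]

theorem stmt0 (D : Finset (Finset F)) (hD : ∀ d ∈ D, d.Nonempty) :
    ∀ M : Finset F, IsMinModel D M ↔ IsMinModel (reduction D) M :=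
  stmt0_general D
end

section
/- Let D be a disjunctive database such that no disjunction of D subsumes another (i.e., D = reduction(D)). If D' is any disjunctive database with the same set of minimal models as D, then D ⊆ D' and every disjunction in D' \ D is subsumed by some disjunction in D. -/
variable {F : Type*} [DecidableEq F]

/-!
A set `c` of facts meets every minimal model of `D` exactly when it contains some disjunction
of `D`: otherwise `⋃ d ∈ D, d \ c` is a model avoiding `c`, and so is any minimal model below
it. Hence two databases with the same minimal models subsume the same sets of facts. Each
`d ∈ D` then contains some `d' ∈ D'`, which in turn contains some `d₀ ∈ D`; as `D` is reduced,
`d₀ = d`, so `d = d' ∈ D'`.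
-/

omit [DecidableEq F] in
theorem IsModel.exists_isMinModel_subset {D : Finset (Finset F)} {M : Finset F} (h : IsModel D M) :
    ∃ M₀ ⊆ M, IsMinModel D M₀ := by
  obtain ⟨M₀, hM₀M, hmodel, hmin⟩ := exists_minimal_le_of_wellFoundedLT (IsModel D) M h
  exact ⟨M₀, hM₀M, hmodel, fun M' hM' hM'model => hM'.2 (hmin hM'model hM'.1)⟩

theorem isModel_biUnion_sdiff_of_forall_not_subset {D : Finset (Finset F)} {c : Finset F}
    (hc : ∀ d ∈ D, ¬ d ⊆ c) : IsModel D (D.biUnion (· \ c)) := fun d hd =>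
  let ⟨t, htd, htc⟩ := Finset.not_subset.mp (hc d hd)
  ⟨t, htd, Finset.mem_biUnion.mpr ⟨d, hd, Finset.mem_sdiff.mpr ⟨htd, htc⟩⟩⟩

theorem exists_subset_iff_forall_isMinModel (D : Finset (Finset F)) (c : Finset F) :
    (∃ d ∈ D, d ⊆ c) ↔ ∀ M, IsMinModel D M → ∃ t ∈ c, t ∈ M := by
  constructor
  · rintro ⟨d, hd, hdc⟩ M hM
    obtain ⟨t, htd, htM⟩ := hM.1 d hd
    exact ⟨t, hdc htd, htM⟩
  · intro h
    by_contra! hc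
    obtain ⟨M₀, hM₀, hmin⟩ :=
      (isModel_biUnion_sdiff_of_forall_not_subset hc).exists_isMinModel_subset
    obtain ⟨t, htc, htM₀⟩ := h M₀ hmin
    obtain ⟨d, -, htd⟩ := Finset.mem_biUnion.mp (hM₀ htM₀)
    exact (Finset.mem_sdiff.mp htd).2 htc

theorem stmt1_general (D D' : Finset (Finset F))
    (hred : ∀ d ∈ D, ∀ d'' ∈ D, ¬ d'' ⊂ d)
    (hsame : ∀ M : Finset F, IsMinModel D' M ↔ IsMinModel D M) :
    D ⊆ D' ∧ ∀ d' ∈ D', d' ∉ D → ∃ d ∈ D, d ⊂ d' := by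
  have subsumes_iff (c : Finset F) : (∃ d' ∈ D', d' ⊆ c) ↔ ∃ d ∈ D, d ⊆ c := by
    simp only [exists_subset_iff_forall_isMinModel, hsame]
  have subsumed (d' : Finset F) (hd' : d' ∈ D') : ∃ d ∈ D, d ⊆ d' :=
    (subsumes_iff d').1 ⟨d', hd', subset_rfl⟩
  refine ⟨fun d hd => ?_, fun d' hd' hd'D => ?_⟩
  · obtain ⟨d', hd', hd'd⟩ := (subsumes_iff d).2 ⟨d, hd, subset_rfl⟩
    obtain ⟨d₀, hd₀, hd₀d'⟩ := subsumed d' hd'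
    have hd₀d : d₀ = d := (hd₀d'.trans hd'd).eq_of_not_ssubset (hred d hd d₀ hd₀)
    rwa [subset_antisymm hd'd (hd₀d ▸ hd₀d')] at hd'
  · obtain ⟨d, hd, hdd'⟩ := subsumed d' hd'
    exact ⟨d, hd, hdd'.ssubset_of_ne fun h => hd'D (h ▸ hd)⟩

theorem stmt1 (D D' : Finset (Finset F))
    (hD : ∀ d ∈ D, d.Nonempty) (hD' : ∀ d ∈ D', d.Nonempty)
    (hred : ∀ d ∈ D, ∀ d'' ∈ D, ¬ d'' ⊂ d)
    (hsame : ∀ M : Finset F, IsMinModel D' M ↔ IsMinModel D M) :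
    D ⊆ D' ∧ ∀ d' ∈ D', d' ∉ D → ∃ d ∈ D, d ⊂ d' :=
  stmt1_general D D' hred hsame
end

section
/- Let D be a disjunctive database with D = reduction(D), and let D' be obtained from D by adding any collection of disjunctions each of which is subsumed by some disjunction of D. Then D' has exactly the same minimal models as D. -/
variable {F : Type*} [DecidableEq F]

section

variable {α : Type*} {D D' : Finset (Finset α)}

theorem IsModel.anti {M : Finset α} (hDD' : D ⊆ D') (hM : IsModel D' M) : IsModel D M :=
  fun d hd => hM d (hDD' hd)

theorem IsModel.of_forall_exists_subset {M : Finset α} (hcover : ∀ d' ∈ D', ∃ d ∈ D, d ⊆ d')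
    (hM : IsModel D M) : IsModel D' M := by
  intro d' hd'
  obtain ⟨d, hd, hdd'⟩ := hcover d' hd'
  obtain ⟨t, htd, htM⟩ := hM d hd
  exact ⟨t, hdd' htd, htM⟩

theorem isMinModel_congr (hmodels : ∀ M, IsModel D M ↔ IsModel D' M) (M : Finset α) :
    IsMinModel D M ↔ IsMinModel D' M := by
  simp only [IsMinModel, hmodels]

end

theorem stmt2_general (D D' : Finset (Finset F))
    (hsub : D ⊆ D')
    (hextra : ∀ d' ∈ D', d' ∉ D → ∃ d ∈ D, d ⊂ d') :
    ∀ M : Finset F, IsMinModel D' M ↔ IsMinModel D M := by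
  have hcover : ∀ d' ∈ D', ∃ d ∈ D, d ⊆ d' := by
    intro d' hd'
    by_cases hd'D : d' ∈ D
    · exact ⟨d', hd'D, subset_rfl⟩
    · obtain ⟨d, hd, hdd'⟩ := hextra d' hd' hd'D
      exact ⟨d, hd, hdd'.subset⟩
  exact isMinModel_congr fun M =>
    ⟨IsModel.anti hsub, IsModel.of_forall_exists_subset hcover⟩

theorem stmt2 (D D' : Finset (Finset F))
    (hD : ∀ d ∈ D, d.Nonempty) (hD' : ∀ d ∈ D', d.Nonempty)
    (hred : reduction D = D)
    (hsub : D ⊆ D')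
    (hextra : ∀ d' ∈ D', d' ∉ D → ∃ d ∈ D, d ⊂ d') :
    ∀ M : Finset F, IsMinModel D' M ↔ IsMinModel D M :=
  stmt2_general D D' hsub hextra
end

section
/- If a disjunctive database D contains a disjunction a, and D' is a disjunctive database containing a disjunction a' that subsumes a (i.e., the fact set of a' is a proper subset of that of a) but D contains neither a' nor any disjunction subsuming a', then D and D' have different sets of minimal models. -/
variable {F : Type*} [DecidableEq F]

/-!
The complement of `a'` meets every disjunction of `D`, since none of them lies inside `a'`.
A minimal model of `D` below it therefore misses `a' ∈ D'`, so it is not a model of `D'`.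
-/

open Finset

theorem isModel_univ_sdiff_iff [Fintype F] {D : Finset (Finset F)} {s : Finset F} :
    IsModel D (univ \ s) ↔ ∀ d ∈ D, ¬ d ⊆ s := by
  simp only [IsModel, mem_sdiff, mem_univ, true_and, not_subset]

theorem stmt4_general [Fintype F] (D D' : Finset (Finset F))
    (a' : Finset F) (ha' : a' ∈ D')
    (h1 : a' ∉ D) (h2 : ∀ d ∈ D, ¬ d ⊂ a') :
    ¬ (∀ M : Finset F, IsMinModel D M ↔ IsMinModel D' M) := by
  intro hsame
  have hcompl : IsModel D (univ \ a') := isModel_univ_sdiff_iff.2 fun d hd hda' =>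
    hda'.ssubset_or_eq.elim (h2 d hd) fun heq => h1 (heq ▸ hd)
  obtain ⟨N, hN, hmin⟩ := exists_minimal_le_of_wellFoundedLT (IsModel D) _ hcompl
  obtain ⟨t, hta', htN⟩ := ((hsame N).1 (minimal_iff_forall_lt.1 hmin)).1 a' ha'
  exact (mem_sdiff.1 (hN htN)).2 hta'

theorem stmt4 [Fintype F] (D D' : Finset (Finset F))
    (hD : ∀ d ∈ D, d.Nonempty) (hD' : ∀ d ∈ D', d.Nonempty)
    (a a' : Finset F) (ha : a ∈ D) (ha' : a' ∈ D')
    (hsub : a' ⊂ a)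
    (h1 : a' ∉ D) (h2 : ∀ d ∈ D, ¬ d ⊂ a') :
    ¬ (∀ M : Finset F, IsMinModel D M ↔ IsMinModel D' M) :=
  stmt4_general D D' a' ha' h1 h2
end

section
/- Under the single functional dependency setting (cliques partitioned into clusters, conflicts exactly between distinct clusters of the same clique), the disjunctive database D consisting of all disjunctions {t_1, ..., t_k} obtained by picking one fact from each cluster of some clique (one such disjunction for every clique and every choice of representatives) has as its minimal models exactly the repairs, i.e., exactly the unions of one cluster per clique. -/
/-!
A set `M` is a model of `D` iff it contains a whole cluster of every clique: if in some clique
every cluster has a fact outside `M`, those facts form a disjunction of `D` that `M` misses.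
So the models are exactly the supersets of repairs. Since clusters are nonempty and pairwise
disjoint, a repair contained in another one is equal to it, and the minimal models are therefore
exactly the repairs.
-/

variable {F : Type*} [DecidableEq F]

omit [DecidableEq F] in
theorem isMinModel_iff_exists_eq_of_isModel_iff {J : Type*} {D : Finset (Finset F)}
    {R : J → Finset F} (hmodel : ∀ M, IsModel D M ↔ ∃ j, R j ⊆ M)
    (hanti : ∀ j j', R j ⊆ R j' → R j = R j') (M : Finset F) :
    IsMinModel D M ↔ ∃ j, M = R j := by
  constructor
  · rintro ⟨hM, hmin⟩
    obtain ⟨j, hjM⟩ := (hmodel M).mp hM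
    refine ⟨j, by_contra fun hne => hmin (R j) (hjM.ssubset_of_ne fun h => hne h.symm) ?_⟩
    exact (hmodel _).mpr ⟨j, subset_rfl⟩
  · rintro ⟨j, rfl⟩
    refine ⟨(hmodel _).mpr ⟨j, subset_rfl⟩, fun M' hM' hM'model => ?_⟩
    obtain ⟨j', hj'⟩ := (hmodel M').mp hM'model
    have hsub : R j' ⊆ R j := hj'.trans hM'.subset
    exact hM'.not_subset (hanti j' j hsub ▸ hj')

section Clusters

variable {ι : Type*} {κ : ι → Type*} (G : (i : ι) → κ i → Finset F)

def repair [Fintype ι] (j : (i : ι) → κ i) : Finset F :=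
  Finset.univ.biUnion fun i => G i (j i)

theorem isModel_iff_forall_exists_subset [∀ i, Fintype (κ i)] {D : Finset (Finset F)}
    (hD : ∀ d : Finset F, d ∈ D ↔
      ∃ (i : ι) (g : κ i → F), (∀ j, g j ∈ G i j) ∧ d = Finset.univ.image g)
    (M : Finset F) :
    IsModel D M ↔ ∀ i, ∃ j, G i j ⊆ M := by
  constructor
  · intro hM i
    by_contra! h
    choose g hgG hgM using fun j => Finset.not_subset.mp (h j)
    obtain ⟨t, ht, htM⟩ := hM _ ((hD _).mpr ⟨i, g, hgG, rfl⟩)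
    obtain ⟨j, -, rfl⟩ := Finset.mem_image.mp ht
    exact hgM j htM
  · intro h d hd
    obtain ⟨i, g, hg, rfl⟩ := (hD d).mp hd
    obtain ⟨j, hj⟩ := h i
    exact ⟨g j, Finset.mem_image_of_mem g (Finset.mem_univ j), hj (hg j)⟩

variable [Fintype ι]

theorem isModel_iff_exists_repair_subset [∀ i, Fintype (κ i)] {D : Finset (Finset F)}
    (hD : ∀ d : Finset F, d ∈ D ↔
      ∃ (i : ι) (g : κ i → F), (∀ j, g j ∈ G i j) ∧ d = Finset.univ.image g)
    (M : Finset F) :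
    IsModel D M ↔ ∃ j, repair G j ⊆ M := by
  simp only [isModel_iff_forall_exists_subset G hD, repair, Finset.biUnion_subset,
    Finset.mem_univ, true_implies, Classical.skolem]

variable {G}

theorem eq_of_cluster_subset_repair (hne : ∀ i j, (G i j).Nonempty)
    (hdisj : Pairwise fun p q : Σ i, κ i => Disjoint (G p.1 p.2) (G q.1 q.2))
    {j : (i : ι) → κ i} {i : ι} {c : κ i} (hsub : G i c ⊆ repair G j) : c = j i := by
  obtain ⟨x, hx⟩ := hne i c
  obtain ⟨k, -, hxk⟩ := Finset.mem_biUnion.mp (hsub hx)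
  have hik : (⟨i, c⟩ : Σ i, κ i) = ⟨k, j k⟩ :=
    by_contra fun h => Finset.disjoint_left.mp (hdisj h) hx hxk
  obtain ⟨rfl, hc⟩ := Sigma.mk.inj_iff.mp hik
  exact eq_of_heq hc

theorem eq_of_repair_subset_repair (hne : ∀ i j, (G i j).Nonempty)
    (hdisj : Pairwise fun p q : Σ i, κ i => Disjoint (G p.1 p.2) (G q.1 q.2))
    {j j' : (i : ι) → κ i} (hsub : repair G j ⊆ repair G j') : j = j' :=
  funext fun i => eq_of_cluster_subset_repair hne hdisj <|
    (Finset.subset_biUnion_of_mem (fun k => G k (j k)) (Finset.mem_univ i)).trans hsub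

end Clusters

theorem stmt9_general (n : ℕ) (m : Fin n → ℕ)
    (G : (i : Fin n) → Fin (m i) → Finset F)
    (hne : ∀ i j, (G i j).Nonempty)
    (hdisj : ∀ p q : Σ i : Fin n, Fin (m i), p ≠ q → Disjoint (G p.1 p.2) (G q.1 q.2))
    (D : Finset (Finset F))
    (hD : ∀ d : Finset F, d ∈ D ↔
      ∃ (i : Fin n) (g : Fin (m i) → F), (∀ j, g j ∈ G i j) ∧ d = Finset.univ.image g) :
    ∀ M : Finset F,
      IsMinModel D M
      ↔ ∃ j : (i : Fin n) → Fin (m i), M = Finset.univ.biUnion (fun i => G i (j i)) :=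
  isMinModel_iff_exists_eq_of_isModel_iff (isModel_iff_exists_repair_subset G hD)
    fun _ _ hsub => congrArg (repair G) (eq_of_repair_subset_repair hne (hdisj · ·) hsub)

theorem stmt9 (n : ℕ) (m : Fin n → ℕ) (hm : ∀ i, 0 < m i)
    (G : (i : Fin n) → Fin (m i) → Finset F)
    (hne : ∀ i j, (G i j).Nonempty)
    (hdisj : ∀ p q : Σ i : Fin n, Fin (m i), p ≠ q → Disjoint (G p.1 p.2) (G q.1 q.2))
    (D : Finset (Finset F))
    (hD : ∀ d : Finset F, d ∈ D ↔
      ∃ (i : Fin n) (g : Fin (m i) → F), (∀ j, g j ∈ G i j) ∧ d = Finset.univ.image g) :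
    ∀ M : Finset F,
      IsMinModel D M
      ↔ ∃ j : (i : Fin n) → Fin (m i), M = Finset.univ.biUnion (fun i => G i (j i)) :=
  stmt9_general n m G hne hdisj D hD
end

section
/- Let D_n be the database with facts t_{11},...,t_{n1}, t_{12}, t_{13}, ..., t_{n2}, t_{n3} and conflict edges: {t_{i1}, t_{j1}} for all i ≠ j, {t_{i1}, t_{i2}} for all i, and {t_{i2}, t_{i3}} for all i. Then the repairs (maximal conflict-free subsets) are exactly: the set {t_{12}, ..., t_{n2}}, together with all sets {t_{i1}, t_{i3}} ∪ { t_j : j ≠ i } where each t_j ∈ {t_{j2}, t_{j3}}, for each 1 ≤ i ≤ n. -/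
variable {F : Type*} [DecidableEq F]

/-- S is conflict-free w.r.t. a binary conflict relation G. -/
def ConflictFree (G : F → F → Prop) (S : Finset F) : Prop :=
  ∀ a ∈ S, ∀ b ∈ S, ¬ G a b

/-- S is a repair of V w.r.t. conflict relation G: a maximal conflict-free subset of V. -/
def IsRepairC (V : Finset F) (G : F → F → Prop) (S : Finset F) : Prop :=
  S ⊆ V ∧ ConflictFree G S ∧ ∀ S', S ⊂ S' → S' ⊆ V → ¬ ConflictFree G S'

/-- Conflict relation of the family D_n: facts are (i,k) with k=0,1,2 encoding
    t_{i1}, t_{i2}, t_{i3}. Edges: {t_{i1},t_{j1}} for i≠j, {t_{i1},t_{i2}}, {t_{i2},t_{i3}}. -/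
def ConfDn (n : ℕ) (a b : Fin n × Fin 3) : Prop :=
  (a.2 = 0 ∧ b.2 = 0 ∧ a.1 ≠ b.1) ∨
  (a.1 = b.1 ∧ ((a.2 = 0 ∧ b.2 = 1) ∨ (a.2 = 1 ∧ b.2 = 0) ∨
                (a.2 = 1 ∧ b.2 = 2) ∨ (a.2 = 2 ∧ b.2 = 1)))

/-- The repair {t_{12},...,t_{n2}}. -/
def repA (n : ℕ) : Finset (Fin n × Fin 3) :=
  Finset.univ.image (fun i => (i, (1 : Fin 3)))

/-- The repair {t_{i1}, t_{i3}} ∪ { (j, f j) : j ≠ i } (for f choosing among t_{j2}, t_{j3}). -/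
def repB (n : ℕ) (i : Fin n) (f : Fin n → Fin 3) : Finset (Fin n × Fin 3) :=
  insert (i, (0 : Fin 3)) (insert (i, (2 : Fin 3))
    ((Finset.univ.erase i).image (fun j => (j, f j))))

/-- The disjunctions t_{i2} ∨ t_{i3}. -/
def DnD1 (n : ℕ) : Finset (Finset (Fin n × Fin 3)) :=
  Finset.univ.image (fun i : Fin n => ({(i, (1 : Fin 3)), (i, (2 : Fin 3))} : Finset (Fin n × Fin 3)))

/-- The disjunctions t_{i1} ∨ t_{i2} ∨ ⋁_{z ≠ i} t_z with t_z ∈ {t_{z1}, t_{z3}}. -/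
def DnD2 (n : ℕ) : Finset (Finset (Fin n × Fin 3)) :=
  Finset.univ.image (fun p : Fin n × (Fin n → Bool) =>
    insert (p.1, (0 : Fin 3)) (insert (p.1, (1 : Fin 3))
      ((Finset.univ.erase p.1).image
        (fun z => (z, if p.2 z then (0 : Fin 3) else (2 : Fin 3))))))

/-- The disjunctions t_1 ∨ ... ∨ t_n with t_i ∈ {t_{i1}, t_{i3}}. -/
def DnD3 (n : ℕ) : Finset (Finset (Fin n × Fin 3)) :=
  Finset.univ.image (fun g : Fin n → Bool =>
    Finset.univ.image (fun i : Fin n => (i, if g i then (0 : Fin 3) else (2 : Fin 3))))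


/-!
A set of facts is a repair iff it is conflict-free and every fact outside it conflicts with one
inside. If a repair `S` contains no `t_{i1}`, then each `t_{j1}` can only be blocked by `t_{j2}`,
so `S ⊇ {t_{12}, …, t_{n2}}`, and this set already blocks everything else. If `t_{i1} ∈ S`, it
is the only fact of the form `t_{·1}` in `S` and it excludes `t_{i2}`; then `t_{i3}` has no
blocker and must be in `S`, while for `j ≠ i` exactly one of `t_{j2}`, `t_{j3}` lies in `S`.
-/

theorem isRepairC_iff {V S : Finset F} {G : F → F → Prop} [Std.Irrefl G] [Std.Symm G] :
    IsRepairC V G S ↔ S ⊆ V ∧ ConflictFree G S ∧ ∀ x ∈ V, x ∉ S → ∃ y ∈ S, G x y := by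
  refine and_congr_right fun hSV => and_congr_right fun hcf => ⟨fun hmax x hxV hxS => ?_, ?_⟩
  · by_contra! hx
    refine hmax (insert x S) (Finset.ssubset_insert hxS) (Finset.insert_subset hxV hSV) ?_
    simp only [ConflictFree, Finset.forall_mem_insert]
    exact ⟨⟨Std.Irrefl.irrefl x, hx⟩, fun a ha => ⟨fun h => hx a ha (Std.Symm.symm _ _ h), hcf a ha⟩⟩
  · intro hext S' hSS' hS'V hcf'
    obtain ⟨x, hxS', hxS⟩ := Finset.exists_of_ssubset hSS'
    obtain ⟨y, hyS, hxy⟩ := hext x (hS'V hxS') hxS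
    exact hcf' x hxS' y (hSS'.subset hyS) hxy

section

variable {n : ℕ}

namespace ConfDn

instance : Std.Irrefl (ConfDn n) where
  irrefl a := by simp only [ConfDn]; omega

instance : Std.Symm (ConfDn n) where
  symm a b := by simp only [ConfDn]; omega

@[simp] theorem mk_iff {i j : Fin n} {k l : Fin 3} :
    ConfDn n (i, k) (j, l) ↔ (k = 0 ∧ l = 0 ∧ i ≠ j) ∨
      (i = j ∧ ((k = 0 ∧ l = 1) ∨ (k = 1 ∧ l = 0) ∨ (k = 1 ∧ l = 2) ∨ (k = 2 ∧ l = 1))) :=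
  Iff.rfl

end ConfDn

theorem isRepairC_univ_confDn_iff {S : Finset (Fin n × Fin 3)} :
    IsRepairC Finset.univ (ConfDn n) S ↔
      ConflictFree (ConfDn n) S ∧ ∀ x ∉ S, ∃ y ∈ S, ConfDn n x y := by
  simp [isRepairC_iff]

@[simp] theorem mk_mem_repA {j : Fin n} {k : Fin 3} : (j, k) ∈ repA n ↔ k = 1 := by
  simp [repA, eq_comm]

@[simp] theorem mk_mem_repB {i j : Fin n} {f : Fin n → Fin 3} {k : Fin 3} :
    (j, k) ∈ repB n i f ↔ (j = i ∧ k ≠ 1) ∨ (j ≠ i ∧ k = f j) := by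
  simp only [repB, Finset.mem_insert, Prod.mk.injEq, Finset.mem_image, Finset.mem_erase,
    Finset.mem_univ, and_true]
  grind

theorem repA_isRepairC : IsRepairC Finset.univ (ConfDn n) (repA n) := by
  refine isRepairC_univ_confDn_iff.mpr ⟨?_, ?_⟩
  · rintro ⟨i, k⟩ hi ⟨j, l⟩ hj
    simp only [mk_mem_repA] at hi hj
    simp [hi, hj]
  · rintro ⟨j, k⟩ hk
    exact ⟨(j, 1), by simp, by simp only [mk_mem_repA, ConfDn.mk_iff] at hk ⊢; grind⟩

theorem repB_isRepairC {i : Fin n} {f : Fin n → Fin 3} (hf : ∀ j, f j = 1 ∨ f j = 2) :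
    IsRepairC Finset.univ (ConfDn n) (repB n i f) := by
  refine isRepairC_univ_confDn_iff.mpr ⟨?_, ?_⟩
  · rintro ⟨a, k⟩ ha ⟨b, l⟩ hb
    simp only [mk_mem_repB] at ha hb
    have := hf a
    have := hf b
    simp only [ConfDn.mk_iff]
    grind
  · rintro ⟨j, k⟩ hk
    simp only [mk_mem_repB] at hk
    by_cases hj : j = i
    · exact ⟨(i, 0), by simp, by simp only [hj, ConfDn.mk_iff]; grind⟩
    · by_cases hk0 : k = 0
      · exact ⟨(i, 0), by simp, by simp [hj, hk0]⟩
      · have := hf j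
        exact ⟨(j, f j), by simp [hj], by simp only [ConfDn.mk_iff]; grind⟩

theorem eq_repA_of_isRepairC {S : Finset (Fin n × Fin 3)}
    (hS : IsRepairC Finset.univ (ConfDn n) S) (h0 : ∀ i, (i, 0) ∉ S) : S = repA n := by
  obtain ⟨hcf, hmax⟩ := isRepairC_univ_confDn_iff.mp hS
  have h1 : ∀ j, (j, 1) ∈ S := by
    intro j
    obtain ⟨⟨l, m⟩, hlm, hc⟩ := hmax (j, 0) (h0 j)
    simp only [ConfDn.mk_iff] at hc
    rcases hc with ⟨-, rfl, -⟩ | ⟨rfl, hc⟩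
    · exact absurd hlm (h0 l)
    · obtain rfl : m = 1 := by omega
      exact hlm
  ext ⟨j, k⟩
  rw [mk_mem_repA]
  refine ⟨fun hk => ?_, fun hk => hk ▸ h1 j⟩
  have hk0 : k ≠ 0 := by rintro rfl; exact h0 j hk
  have hk2 : k ≠ 2 := by rintro rfl; exact hcf _ hk _ (h1 j) (by simp)
  omega

theorem eq_repB_of_isRepairC {S : Finset (Fin n × Fin 3)}
    (hS : IsRepairC Finset.univ (ConfDn n) S) {i : Fin n} (hi : (i, 0) ∈ S) :
    S = repB n i (fun j => if (j, 1) ∈ S then 1 else 2) := by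
  obtain ⟨hcf, hmax⟩ := isRepairC_univ_confDn_iff.mp hS
  have h0 : ∀ j, (j, 0) ∈ S → j = i := fun j hj => by
    by_contra hji; exact hcf _ hj _ hi (by simp [hji])
  have hi1 : (i, 1) ∉ S := fun h => hcf _ hi _ h (by simp)
  have hi2 : (i, 2) ∈ S := by
    by_contra h
    obtain ⟨⟨l, m⟩, hlm, hc⟩ := hmax (i, 2) h
    simp only [ConfDn.mk_iff] at hc
    obtain ⟨rfl, rfl⟩ : l = i ∧ m = 1 := by omega
    exact hi1 hlm
  have h_not_both : ∀ j, (j, 1) ∈ S → (j, 2) ∉ S := fun j h1 h2 => hcf _ h1 _ h2 (by simp)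
  have h_two_of_not_one : ∀ j ≠ i, (j, 1) ∉ S → (j, 2) ∈ S := by
    intro j hj h1
    obtain ⟨⟨l, m⟩, hlm, hc⟩ := hmax (j, 1) h1
    simp only [ConfDn.mk_iff] at hc
    obtain ⟨rfl, rfl | rfl⟩ : l = j ∧ (m = 0 ∨ m = 2) := by omega
    · exact absurd (h0 l hlm) hj
    · exact hlm
  ext ⟨j, k⟩
  rw [mk_mem_repB]
  grind

end

theorem stmt12 (n : ℕ) :
    ∀ S : Finset (Fin n × Fin 3),
      IsRepairC Finset.univ (ConfDn n) S
      ↔ (S = repA n ∨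
          ∃ (i : Fin n) (f : Fin n → Fin 3),
            (∀ j, f j = 1 ∨ f j = 2) ∧ S = repB n i f) := by
  intro S
  constructor
  · intro hS
    by_cases h0 : ∃ i, (i, 0) ∈ S
    · obtain ⟨i, hi⟩ := h0
      refine Or.inr ⟨i, _, fun j => ?_, eq_repB_of_isRepairC hS hi⟩
      split_ifs <;> simp
    · exact Or.inl (eq_repA_of_isRepairC hS (not_exists.mp h0))
  · rintro (rfl | ⟨i, f, hf, rfl⟩)
    exacts [repA_isRepairC, repB_isRepairC hf]
end

section
/- The canonical disjunctive database for the two-key database family D_n (conflict edges {t_{i1},t_{j1}} for i≠j, {t_{i1},t_{i2}}, {t_{i2},t_{i3}}) has size exactly 2n + (n+1)·n·2^{n-1}: it contains n disjunctions of 2 facts each and n·2^{n-1} disjunctions of n+1 facts each. -/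
variable {F : Type*} [DecidableEq F]

/-!
A disjunction `t_{i1} ∨ t_{i2} ∨ ⋁_{z ≠ i} t_z` determines its key `i` (the only index whose middle
fact `t_{i2}` occurs) and each choice `t_z` with `z ≠ i`, while the choice parameter at `i` itself
is ignored by the encoding. So there are `n * 2 ^ (n - 1)` of them, each with `2 + (n - 1)` facts,
and none is a disjunction `t_{i2} ∨ t_{i3}`, since those contain no fact `t_{z1}`.
-/

open Finset

/-- `t_{z1}` (for `true`) or `t_{z3}` (for `false`), the ends of the conflict path
`t_{z1} - t_{z2} - t_{z3}`. -/
def pathEnd (b : Bool) : Fin 3 :=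
  if b then 0 else 2

lemma pathEnd_injective : Function.Injective pathEnd := by decide

lemma pathEnd_ne_one (b : Bool) : pathEnd b ≠ 1 := by cases b <;> decide

section Clauses

variable {ι : Type*} [DecidableEq ι]

def clauseD1 (i : ι) : Finset (ι × Fin 3) :=
  {(i, 1), (i, 2)}

lemma clauseD1_injective : Function.Injective (clauseD1 : ι → Finset (ι × Fin 3)) := by
  intro i j h
  have hmem : ((i, 1) : ι × Fin 3) ∈ clauseD1 j := h ▸ by simp [clauseD1]
  simpa [clauseD1] using hmem

lemma card_clauseD1 (i : ι) : #(clauseD1 i) = 2 :=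
  card_pair (by simp)

variable [Fintype ι]

def clauseD2 (i : ι) (g : ι → Bool) : Finset (ι × Fin 3) :=
  insert (i, 0) (insert (i, 1) ((univ.erase i).image fun z => (z, pathEnd (g z))))

lemma mem_clauseD2 {i z : ι} {g : ι → Bool} {k : Fin 3} :
    (z, k) ∈ clauseD2 i g ↔ if z = i then k = 0 ∨ k = 1 else k = pathEnd (g z) := by
  by_cases hz : z = i
  · simp [clauseD2, hz]
  · simp [clauseD2, hz, Ne.symm hz, eq_comm]

lemma clauseD2_inj {i j : ι} {g h : ι → Bool} :
    clauseD2 i g = clauseD2 j h ↔ i = j ∧ ∀ z ≠ i, g z = h z := by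
  constructor
  · intro hgh
    have hij : i = j := by
      have hmem : ((i, 1) : ι × Fin 3) ∈ clauseD2 j h := hgh ▸ mem_clauseD2.2 (by simp)
      by_contra hne
      rw [mem_clauseD2, if_neg hne] at hmem
      exact pathEnd_ne_one _ hmem.symm
    refine ⟨hij, fun z hz => pathEnd_injective ?_⟩
    subst hij
    have hmem : ((z, pathEnd (g z)) : ι × Fin 3) ∈ clauseD2 i h :=
      hgh ▸ mem_clauseD2.2 (by simp [hz])
    rwa [mem_clauseD2, if_neg hz] at hmem
  · rintro ⟨rfl, hgh⟩
    ext ⟨z, k⟩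
    by_cases hz : z = i
    · simp only [mem_clauseD2, hz, if_true]
    · simp only [mem_clauseD2, if_neg hz, hgh z hz]

lemma card_clauseD2 (i : ι) (g : ι → Bool) : #(clauseD2 i g) = Fintype.card ι + 1 := by
  have hi : 0 < Fintype.card ι := Fintype.card_pos_iff.2 ⟨i⟩
  rw [clauseD2, card_insert_of_notMem, card_insert_of_notMem,
    card_image_of_injective _ fun _ _ h => congrArg Prod.fst h,
    card_erase_of_mem (mem_univ i), card_univ]
  · omega
  · simp
  · simp [Prod.ext_iff]

lemma clauseD1_ne_clauseD2 (i j : ι) (g : ι → Bool) : clauseD1 i ≠ clauseD2 j g := by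
  intro h
  have hmem : ((j, 0) : ι × Fin 3) ∈ clauseD1 i := h ▸ mem_clauseD2.2 (by simp)
  simp [clauseD1] at hmem

lemma disjoint_image_clauseD1_image_clauseD2 :
    Disjoint (univ.image (clauseD1 (ι := ι)))
      (univ.image (Function.uncurry (clauseD2 (ι := ι)))) := by
  simp only [disjoint_left, mem_image, mem_univ, true_and, Prod.exists,
    Function.uncurry_apply_pair, not_exists, forall_exists_index]
  rintro d i rfl j g
  exact (clauseD1_ne_clauseD2 i j g).symm

lemma card_filter_apply_eq_false (i : ι) :
    #{g : ι → Bool | g i = false} = 2 ^ (Fintype.card ι - 1) := by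
  have := Fintype.card_filter_piFinset_const_eq_of_mem (univ : Finset Bool) i (mem_univ false)
  rwa [Fintype.piFinset_univ, card_univ, Fintype.card_bool] at this

lemma card_image_clauseD2 :
    #(univ.image (Function.uncurry (clauseD2 (ι := ι)))) =
      Fintype.card ι * 2 ^ (Fintype.card ι - 1) := by
  set normal : Finset (ι × (ι → Bool)) := {p | p.2 p.1 = false}
  have himage : univ.image (Function.uncurry clauseD2) =
      normal.image (Function.uncurry (clauseD2 (ι := ι))) := by
    refine Subset.antisymm (fun d hd => ?_) (image_subset_image (subset_univ _))
    obtain ⟨⟨i, g⟩, -, rfl⟩ := mem_image.1 hd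
    refine mem_image.2 ⟨(i, Function.update g i false), by simp [normal], ?_⟩
    exact clauseD2_inj.2 ⟨rfl, fun z hz => by simp [hz]⟩
  have hinj : Set.InjOn (Function.uncurry (clauseD2 (ι := ι))) normal := by
    rintro ⟨i, g⟩ hg ⟨j, h⟩ hh hgh
    obtain ⟨rfl, hz⟩ := clauseD2_inj.1 hgh
    simp only [normal, coe_filter, mem_univ, true_and, Set.mem_ofPred_eq] at hg hh
    refine Prod.ext rfl (funext fun z => ?_)
    by_cases hzi : z = i
    · simp only [hzi, hg, hh]
    · exact hz z hzi
  rw [himage, card_image_of_injOn hinj, card_filter, Fintype.sum_prod_type]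
  simp only [← card_filter, card_filter_apply_eq_false, sum_const, card_univ, smul_eq_mul]

end Clauses

lemma DnD1_eq_image (n : ℕ) : DnD1 n = univ.image clauseD1 := rfl

lemma DnD2_eq_image (n : ℕ) : DnD2 n = univ.image (Function.uncurry clauseD2) := rfl

theorem stmt14 (n : ℕ) :
    (DnD1 n).card = n
    ∧ (∀ d ∈ DnD1 n, d.card = 2)
    ∧ (DnD2 n).card = n * 2 ^ (n - 1)
    ∧ (∀ d ∈ DnD2 n, d.card = n + 1)
    ∧ (∑ d ∈ DnD1 n ∪ DnD2 n, d.card) = 2 * n + (n + 1) * (n * 2 ^ (n - 1)) := by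
  rw [DnD1_eq_image, DnD2_eq_image]
  have hcard1 : #(univ.image (clauseD1 (ι := Fin n))) = n := by
    rw [card_image_of_injective _ clauseD1_injective, card_univ, Fintype.card_fin]
  have hsize1 : ∀ d ∈ univ.image (clauseD1 (ι := Fin n)), #d = 2 :=
    forall_mem_image.2 fun i _ => card_clauseD1 i
  have hcard2 : #(univ.image (Function.uncurry (clauseD2 (ι := Fin n)))) = n * 2 ^ (n - 1) := by
    rw [card_image_clauseD2, Fintype.card_fin]
  have hsize2 : ∀ d ∈ univ.image (Function.uncurry (clauseD2 (ι := Fin n))), #d = n + 1 :=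
    forall_mem_image.2 fun p _ => (card_clauseD2 p.1 p.2).trans (by rw [Fintype.card_fin])
  refine ⟨hcard1, hsize1, hcard2, hsize2, ?_⟩
  rw [sum_union disjoint_image_clauseD1_image_clauseD2, sum_const_nat hsize1,
    sum_const_nat hsize2, hcard1, hcard2]
  ring
end

section
/- For the conflict graph of the family D_n (edges {t_{i1},t_{j1}} for i≠j, {t_{i1},t_{i2}}, {t_{i2},t_{i3}}), the cardinality-based repairs (consistent subsets of maximum cardinality) are exactly the sets {t_{i1}, t_{i3}} ∪ { t_j : j ≠ i } with t_j ∈ {t_{j2}, t_{j3}}, for 1 ≤ i ≤ n and n ≥ 2; in particular the repair {t_{12},...,t_{n2}} of cardinality n is not cardinality-based since the others have cardinality n+1. -/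
variable {F : Type*} [DecidableEq F]

/-- A cardinality-based repair: a conflict-free set of maximum cardinality. -/
def IsCardRepair (G : F → F → Prop) (S : Finset F) : Prop :=
  ConflictFree G S ∧ ∀ S' : Finset F, ConflictFree G S' → S'.card ≤ S.card

/- In a conflict-free set at most one fact has the form t_{i1}, since these facts pairwise conflict,
and no index carries two of the other facts, since t_{j2} and t_{j3} conflict. Hence a conflict-free
set has at most n + 1 facts, and the sets {t_{i1}, t_{i3}} ∪ {t_j : j ≠ i} reach this bound. A set
reaching it contains some t_{i1} and one of t_{j2}, t_{j3} for every j; at j = i this must be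
t_{i3}, which pins the set down as one of those sets. The repair {t_{12}, ..., t_{n2}} has only n
facts. -/

theorem isCardRepair_iff_card_eq {α : Type*} {G : α → α → Prop} {m : ℕ}
    (hbound : ∀ S : Finset α, ConflictFree G S → S.card ≤ m)
    (hattained : ∃ S₀ : Finset α, ConflictFree G S₀ ∧ S₀.card = m) (S : Finset α) :
    IsCardRepair G S ↔ ConflictFree G S ∧ S.card = m := by
  obtain ⟨S₀, hS₀, hcard₀⟩ := hattained
  constructor
  · rintro ⟨hS, hmax⟩
    exact ⟨hS, (hbound S hS).antisymm (hcard₀ ▸ hmax S₀ hS₀)⟩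
  · rintro ⟨hS, hcard⟩
    exact ⟨hS, fun S' hS' => hcard ▸ hbound S' hS'⟩

namespace ConfDn

variable {n : ℕ} {S : Finset (Fin n × Fin 3)}

theorem card_filter_snd_eq_zero_le_one (hS : ConflictFree (ConfDn n) S) :
    (S.filter fun a => a.2 = 0).card ≤ 1 := by
  refine Finset.card_le_one.mpr fun a ha b hb => ?_
  rw [Finset.mem_filter] at ha hb
  by_contra hab
  exact hS a ha.1 b hb.1 (Or.inl ⟨ha.2, hb.2, fun h => hab (Prod.ext h (ha.2.trans hb.2.symm))⟩)

theorem injOn_fst_filter_snd_ne_zero (hS : ConflictFree (ConfDn n) S) :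
    Set.InjOn Prod.fst (↑(S.filter fun a => ¬a.2 = 0) : Set (Fin n × Fin 3)) := by
  intro a ha b hb hab
  rw [Finset.coe_filter] at ha hb
  by_contra hne
  have h12 : a.2 ≠ b.2 := fun h => hne (Prod.ext hab h)
  refine hS a ha.1 b hb.1 (Or.inr ⟨hab, ?_⟩)
  have ha₂ := ha.2
  have hb₂ := hb.2
  omega

theorem card_filter_snd_ne_zero_le (hS : ConflictFree (ConfDn n) S) :
    (S.filter fun a => ¬a.2 = 0).card ≤ n := by
  simpa using Finset.card_le_card_of_injOn Prod.fst (t := Finset.univ)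
    (fun a _ => Finset.mem_coe.mpr (Finset.mem_univ a.1)) (injOn_fst_filter_snd_ne_zero hS)

theorem card_le_of_conflictFree (hS : ConflictFree (ConfDn n) S) : S.card ≤ n + 1 := by
  have := S.card_filter_add_card_filter_not fun a => a.2 = 0
  have := card_filter_snd_eq_zero_le_one hS
  have := card_filter_snd_ne_zero_le hS
  omega

theorem mem_repB {i : Fin n} {f : Fin n → Fin 3} {a : Fin n × Fin 3} :
    a ∈ repB n i f ↔ a = (i, 0) ∨ a = (i, 2) ∨ (a.1 ≠ i ∧ a.2 = f a.1) := by
  simp only [repB, Finset.mem_insert, Finset.mem_image, Finset.mem_erase, Finset.mem_univ, and_true]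
  grind

theorem card_repB (i : Fin n) (f : Fin n → Fin 3) : (repB n i f).card = n + 1 := by
  have hinj : Function.Injective fun j : Fin n => (j, f j) := fun _ _ h => (Prod.ext_iff.mp h).1
  rw [repB, Finset.card_insert_of_notMem (by simp), Finset.card_insert_of_notMem (by simp),
    Finset.card_image_of_injective _ hinj, Finset.card_erase_of_mem (Finset.mem_univ i),
    Finset.card_univ, Fintype.card_fin]
  have := i.pos
  omega

theorem conflictFree_repB (i : Fin n) {f : Fin n → Fin 3} (hf : ∀ j, f j = 1 ∨ f j = 2) :
    ConflictFree (ConfDn n) (repB n i f) := by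
  intro a ha b hb hab
  rw [mem_repB] at ha hb
  have ha₂ := hf a.1
  have hb₂ := hf b.1
  unfold ConfDn at hab
  grind

theorem card_repA : (repA n).card = n := by
  rw [repA, Finset.card_image_of_injective _ fun a b h => (Prod.ext_iff.mp h).1]
  simp

theorem exists_eq_repB_of_card_eq (hS : ConflictFree (ConfDn n) S) (hcard : S.card = n + 1) :
    ∃ (i : Fin n) (f : Fin n → Fin 3), (∀ j, f j = 1 ∨ f j = 2) ∧ S = repB n i f := by
  have hsplit := S.card_filter_add_card_filter_not fun a => a.2 = 0
  have hzero := card_filter_snd_eq_zero_le_one hS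
  have hnonzero := card_filter_snd_ne_zero_le hS
  obtain ⟨⟨i, k⟩, hik⟩ := Finset.card_pos.mp (show 0 < (S.filter fun a => a.2 = 0).card by omega)
  obtain ⟨hiS, rfl : k = 0⟩ := Finset.mem_filter.mp hik
  have hcover : ∀ j, ∃ k, k ≠ 0 ∧ (j, k) ∈ S := by
    have himage : (S.filter fun a => ¬a.2 = 0).image Prod.fst = Finset.univ :=
      Finset.eq_univ_of_card _ <| by
        rw [Finset.card_image_of_injOn (injOn_fst_filter_snd_ne_zero hS), Fintype.card_fin]
        omega
    intro j
    obtain ⟨a, ha, rfl⟩ := Finset.mem_image.mp (himage ▸ Finset.mem_univ j)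
    exact ⟨a.2, (Finset.mem_filter.mp ha).2, (Finset.mem_filter.mp ha).1⟩
  choose f hf0 hfS using hcover
  have hf : ∀ j, f j = 1 ∨ f j = 2 := fun j => by
    have := hf0 j
    omega
  have hfi : f i = 2 :=
    (hf i).resolve_left fun h1 => hS _ hiS _ (hfS i) (Or.inr ⟨rfl, Or.inl ⟨rfl, h1⟩⟩)
  refine ⟨i, f, hf, (Finset.eq_of_subset_of_card_le ?_ (by rw [hcard, card_repB])).symm⟩
  rintro ⟨j, k⟩ ha
  rcases mem_repB.mp ha with h | h | ⟨-, h⟩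
  · rwa [h]
  · rw [h, ← hfi]
    exact hfS i
  · dsimp only at h
    rw [h]
    exact hfS j

end ConfDn

theorem stmt15 (n : ℕ) (hn : 2 ≤ n) :
    (∀ S : Finset (Fin n × Fin 3),
      IsCardRepair (ConfDn n) S
      ↔ ∃ (i : Fin n) (f : Fin n → Fin 3),
          (∀ j, f j = 1 ∨ f j = 2) ∧ S = repB n i f)
    ∧ ¬ IsCardRepair (ConfDn n) (repA n)
    ∧ (repA n).card = n
    ∧ (∀ (i : Fin n) (f : Fin n → Fin 3),
        (∀ j, f j = 1 ∨ f j = 2) → (repB n i f).card = n + 1) := by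
  have hrepair := isCardRepair_iff_card_eq (fun _ => ConfDn.card_le_of_conflictFree)
    ⟨repB n ⟨0, by omega⟩ fun _ => 1, ConfDn.conflictFree_repB _ fun _ => Or.inl rfl,
      ConfDn.card_repB _ _⟩
  refine ⟨fun S => ?_, ?_, ConfDn.card_repA, fun i f _ => ConfDn.card_repB i f⟩
  · rw [hrepair]
    constructor
    · rintro ⟨hS, hcard⟩
      exact ConfDn.exists_eq_repB_of_card_eq hS hcard
    · rintro ⟨i, f, hf, rfl⟩
      exact ⟨ConfDn.conflictFree_repB i hf, ConfDn.card_repB i f⟩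
  · rw [hrepair, ConfDn.card_repA]
    omega
end

section
/- For the family D_n with n ≥ 2 (conflict edges {t_{i1},t_{j1}} for i≠j, {t_{i1},t_{i2}}, {t_{i2},t_{i3}}), the disjunctive database D = { t_{i2} ∨ t_{i3} : 1 ≤ i ≤ n } ∪ { t_1 ∨ ... ∨ t_n : t_i ∈ {t_{i1}, t_{i3}} } has as its minimal models exactly the cardinality-based repairs, namely the sets {t_{i1}, t_{i3}} ∪ { t_j : j ≠ i, t_j ∈ {t_{j2}, t_{j3}} }. -/
variable {F : Type*} [DecidableEq F]

/-
A model of `DnD1 n` picks `t_{j2}` or `t_{j3}` in every row `j`, and a set meets every transversal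
of `DnD3 n` exactly when some row `i` contains both `t_{i1}` and `t_{i3}` (otherwise the transversal
avoiding `M` row by row is missed). Such a model contains `repB n i f`, with `f` recording the
choice in each row; conversely, inside `repB n i f` the row `i` is the only one containing a
`t_{·1}`, so no proper subset of `repB n i f` is still a model.
-/

section MinimalModels

variable {F : Type*} [DecidableEq F]

theorem isModel_union {D E : Finset (Finset F)} {M : Finset F} :
    IsModel (D ∪ E) M ↔ IsModel D M ∧ IsModel E M := by
  simp only [IsModel, Finset.mem_union, or_imp, forall_and]

theorem isMinModel_iff {D : Finset (Finset F)} {M : Finset F} :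
    IsMinModel D M ↔ IsModel D M ∧ ∀ M' ⊆ M, IsModel D M' → M ⊆ M' := by
  refine and_congr_right fun _ => ⟨fun hmin M' hsub hM' => ?_, fun hmin M' hlt hM' => ?_⟩
  · by_contra hnot
    exact hmin M' (Finset.ssubset_iff_subset_ne.mpr ⟨hsub, fun h => hnot h.ge⟩) hM'
  · exact hlt.not_subset (hmin M' hlt.subset hM')

end MinimalModels

section Dn

variable {n : ℕ}

theorem mem_repB (i : Fin n) (f : Fin n → Fin 3) (a : Fin n) (k : Fin 3) :
    (a, k) ∈ repB n i f ↔ (a = i ∧ (k = 0 ∨ k = 2)) ∨ (a ≠ i ∧ k = f a) := by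
  simp only [repB, Finset.mem_insert, Finset.mem_image, Finset.mem_erase, Finset.mem_univ,
    and_true, Prod.ext_iff]
  constructor
  · rintro (⟨rfl, rfl⟩ | ⟨rfl, rfl⟩ | ⟨j, hj, rfl, rfl⟩)
    exacts [Or.inl ⟨rfl, Or.inl rfl⟩, Or.inl ⟨rfl, Or.inr rfl⟩, Or.inr ⟨hj, rfl⟩]
  · rintro (⟨rfl, rfl | rfl⟩ | ⟨ha, rfl⟩)
    exacts [Or.inl ⟨rfl, rfl⟩, Or.inr (Or.inl ⟨rfl, rfl⟩), Or.inr (Or.inr ⟨a, ha, rfl, rfl⟩)]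

theorem isModel_DnD1_iff {M : Finset (Fin n × Fin 3)} :
    IsModel (DnD1 n) M ↔ ∀ j, (j, 1) ∈ M ∨ (j, 2) ∈ M := by
  simp only [IsModel, DnD1, Finset.mem_image, Finset.mem_univ, true_and, forall_exists_index,
    forall_apply_eq_imp_iff, Finset.mem_insert, Finset.mem_singleton, exists_eq_or_imp,
    exists_eq_left]

theorem isModel_DnD3_iff {M : Finset (Fin n × Fin 3)} :
    IsModel (DnD3 n) M ↔ ∃ i, (i, 0) ∈ M ∧ (i, 2) ∈ M := by
  simp only [IsModel, DnD3, Finset.mem_image, Finset.mem_univ, true_and, forall_exists_index,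
    forall_apply_eq_imp_iff, exists_exists_eq_and]
  constructor
  · intro hM
    obtain ⟨i, hi⟩ := hM fun z => decide ((z, 2) ∈ M)
    by_cases h2 : (i, 2) ∈ M
    · exact ⟨i, by simpa [h2] using hi, h2⟩
    · simp [h2] at hi
  · rintro ⟨i, hi0, hi2⟩ g
    exact ⟨i, by cases g i <;> assumption⟩

theorem exists_repB_subset {M : Finset (Fin n × Fin 3)} (hM : IsModel (DnD1 n) M) {i : Fin n}
    (hi0 : (i, 0) ∈ M) (hi2 : (i, 2) ∈ M) :
    ∃ f : Fin n → Fin 3, (∀ j, f j = 1 ∨ f j = 2) ∧ repB n i f ⊆ M := by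
  let f : Fin n → Fin 3 := fun j => if (j, 1) ∈ M then 1 else 2
  refine ⟨f, fun j => by dsimp only [f]; split_ifs <;> simp, ?_⟩
  rintro ⟨a, k⟩ ha
  rcases (mem_repB i f a k).mp ha with ⟨rfl, rfl | rfl⟩ | ⟨-, rfl⟩
  · exact hi0
  · exact hi2
  · dsimp only [f]
    split_ifs with h1
    · exact h1
    · exact (isModel_DnD1_iff.mp hM a).resolve_left h1

theorem isModel_repB {i : Fin n} {f : Fin n → Fin 3} (hf : ∀ j, f j = 1 ∨ f j = 2) :
    IsModel (DnD1 n ∪ DnD3 n) (repB n i f) := by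
  rw [isModel_union, isModel_DnD1_iff, isModel_DnD3_iff]
  refine ⟨fun j => ?_, i, (mem_repB ..).mpr (.inl ⟨rfl, .inl rfl⟩),
    (mem_repB ..).mpr (.inl ⟨rfl, .inr rfl⟩)⟩
  by_cases hj : j = i
  · exact .inr ((mem_repB ..).mpr (.inl ⟨hj, .inr rfl⟩))
  · rcases hf j with h | h
    · exact .inl ((mem_repB ..).mpr (.inr ⟨hj, h.symm⟩))
    · exact .inr ((mem_repB ..).mpr (.inr ⟨hj, h.symm⟩))

theorem repB_subset_of_isModel {i : Fin n} {f : Fin n → Fin 3} (hf : ∀ j, f j = 1 ∨ f j = 2)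
    {M : Finset (Fin n × Fin 3)} (hsub : M ⊆ repB n i f)
    (hM : IsModel (DnD1 n ∪ DnD3 n) M) : repB n i f ⊆ M := by
  rw [isModel_union, isModel_DnD1_iff, isModel_DnD3_iff] at hM
  obtain ⟨hrow, j, hj0, hj2⟩ := hM
  have hf0 : ∀ a, f a ≠ 0 := fun a h => by rcases hf a with h' | h' <;> simp [h] at h'
  obtain rfl : i = j := by
    simpa [mem_repB, (hf0 j).symm, eq_comm] using hsub hj0
  rintro ⟨a, k⟩ ha
  rcases (mem_repB i f a k).mp ha with ⟨rfl, rfl | rfl⟩ | ⟨hai, rfl⟩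
  · exact hj0
  · exact hj2
  · rcases hrow a with h | h
    · have hfa : 1 = f a := by simpa [mem_repB, hai] using hsub h
      rwa [← hfa]
    · have hfa : 2 = f a := by simpa [mem_repB, hai] using hsub h
      rwa [← hfa]
end Dn

theorem stmt16_general (n : ℕ) :
    ∀ M : Finset (Fin n × Fin 3),
      IsMinModel (DnD1 n ∪ DnD3 n) M
      ↔ ∃ (i : Fin n) (f : Fin n → Fin 3),
          (∀ j, f j = 1 ∨ f j = 2) ∧ M = repB n i f := by
  intro M
  rw [isMinModel_iff]
  constructor
  · rintro ⟨hM, hmin⟩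
    obtain ⟨hM1, hM3⟩ := isModel_union.mp hM
    obtain ⟨i, hi0, hi2⟩ := isModel_DnD3_iff.mp hM3
    obtain ⟨f, hf, hsub⟩ := exists_repB_subset hM1 hi0 hi2
    exact ⟨i, f, hf, (hmin _ hsub (isModel_repB hf)).antisymm hsub⟩
  · rintro ⟨i, f, hf, rfl⟩
    exact ⟨isModel_repB hf, fun M' hsub hM' => repB_subset_of_isModel hf hsub hM'⟩

theorem stmt16 (n : ℕ) (hn : 2 ≤ n) :
    ∀ M : Finset (Fin n × Fin 3),
      IsMinModel (DnD1 n ∪ DnD3 n) M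
      ↔ ∃ (i : Fin n) (f : Fin n → Fin 3),
          (∀ j, f j = 1 ∨ f j = 2) ∧ M = repB n i f :=
  stmt16_general n
end

section
/- The canonical disjunctive database representing the cardinality-based repairs of the family D_n has size exactly 2n + n·2^n: it contains n disjunctions of 2 facts and 2^n disjunctions of n facts, and no disjunction subsumes another. -/
variable {F : Type*} [DecidableEq F]

open Finset Function

section Graph

variable {α β : Type*} [Fintype α] [DecidableEq α] [DecidableEq β]

def finsetGraph (f : α → β) : Finset (α × β) :=
  univ.image fun a => (a, f a)

theorem mem_finsetGraph {f : α → β} {x : α × β} : x ∈ finsetGraph f ↔ f x.1 = x.2 := by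
  constructor
  · intro hx
    obtain ⟨a, -, rfl⟩ := mem_image.1 hx
    rfl
  · intro hx
    exact mem_image.2 ⟨x.1, mem_univ _, by rw [hx]⟩

theorem card_finsetGraph (f : α → β) : #(finsetGraph f) = Fintype.card α :=
  card_image_of_injective _ fun _ _ h => congrArg Prod.fst h

theorem finsetGraph_injective : Injective (finsetGraph : (α → β) → Finset (α × β)) := by
  intro f g h
  funext a
  have : (a, f a) ∈ finsetGraph g := h ▸ mem_finsetGraph.2 rfl
  exact (mem_finsetGraph.1 this).symm

end Graph

variable {n : ℕ}

theorem DnD3_eq_image_finsetGraph :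
    DnD3 n = univ.image fun g : Fin n → Bool => finsetGraph fun i => if g i then 0 else 2 :=
  rfl

theorem card_DnD1 : #(DnD1 n) = n := by
  rw [DnD1, card_image_of_injective, card_univ, Fintype.card_fin]
  intro i j h
  have : (i, (1 : Fin 3)) ∈ ({(j, 1), (j, 2)} : Finset (Fin n × Fin 3)) := by
    simp only at h
    exact h ▸ mem_insert_self _ _
  simpa [Prod.ext_iff] using this

theorem card_of_mem_DnD1 {d : Finset (Fin n × Fin 3)} (hd : d ∈ DnD1 n) : #d = 2 := by
  obtain ⟨i, -, rfl⟩ := mem_image.1 hd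
  exact card_pair (by simp)

theorem card_DnD3 : #(DnD3 n) = 2 ^ n := by
  have hcode : Injective fun b : Bool => if b then (0 : Fin 3) else 2 := by decide
  rw [DnD3_eq_image_finsetGraph, card_image_of_injective, card_univ, Fintype.card_fun,
    Fintype.card_bool, Fintype.card_fin]
  exact fun g g' h => hcode.comp_left (finsetGraph_injective h)

theorem card_of_mem_DnD3 {d : Finset (Fin n × Fin 3)} (hd : d ∈ DnD3 n) : #d = n := by
  rw [DnD3_eq_image_finsetGraph] at hd
  obtain ⟨g, -, rfl⟩ := mem_image.1 hd
  rw [card_finsetGraph, Fintype.card_fin]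

theorem snd_ne_one_of_mem_DnD3 {d : Finset (Fin n × Fin 3)} (hd : d ∈ DnD3 n)
    {x : Fin n × Fin 3} (hx : x ∈ d) : x.2 ≠ 1 := by
  obtain ⟨g, -, rfl⟩ := mem_image.1 hd
  rw [← mem_finsetGraph.1 hx]
  split <;> decide

theorem not_subset_of_mem_DnD1_of_mem_DnD3 {d d' : Finset (Fin n × Fin 3)} (hd : d ∈ DnD1 n)
    (hd' : d' ∈ DnD3 n) : ¬ d ⊆ d' := by
  obtain ⟨i, -, rfl⟩ := mem_image.1 hd
  exact fun h => snd_ne_one_of_mem_DnD3 hd' (h (mem_insert_self _ _)) rfl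

theorem disjoint_DnD1_DnD3 : Disjoint (DnD1 n) (DnD3 n) :=
  disjoint_left.2 fun _ hd hd' => not_subset_of_mem_DnD1_of_mem_DnD3 hd hd' subset_rfl

theorem sum_card_DnD1_union_DnD3 : ∑ d ∈ DnD1 n ∪ DnD3 n, #d = 2 * n + n * 2 ^ n := by
  rw [sum_union disjoint_DnD1_DnD3, sum_const_nat fun _ => card_of_mem_DnD1,
    sum_const_nat fun _ => card_of_mem_DnD3, card_DnD1, card_DnD3]
  ring

/- A proper inclusion raises the size, so with `n ≥ 2` only `t_{i2} ∨ t_{i3} ⊂ d'` for `d' ∈ DnD3 n`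
remains, and it fails since no disjunction of `DnD3 n` mentions `t_{i2}`. -/
theorem not_ssubset_of_mem_DnD1_union_DnD3 (hn : 2 ≤ n) {d d' : Finset (Fin n × Fin 3)}
    (hd : d ∈ DnD1 n ∪ DnD3 n) (hd' : d' ∈ DnD1 n ∪ DnD3 n) : ¬ d ⊂ d' := by
  intro hss
  have hlt := card_lt_card hss
  rcases mem_union.1 hd with hd | hd <;> rcases mem_union.1 hd' with hd' | hd'
  · rw [card_of_mem_DnD1 hd, card_of_mem_DnD1 hd'] at hlt; omega
  · exact not_subset_of_mem_DnD1_of_mem_DnD3 hd hd' hss.subset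
  · rw [card_of_mem_DnD3 hd, card_of_mem_DnD1 hd'] at hlt; omega
  · rw [card_of_mem_DnD3 hd, card_of_mem_DnD3 hd'] at hlt; omega

theorem stmt17 (n : ℕ) (hn : 2 ≤ n) :
    (DnD1 n).card = n
    ∧ (∀ d ∈ DnD1 n, d.card = 2)
    ∧ (DnD3 n).card = 2 ^ n
    ∧ (∀ d ∈ DnD3 n, d.card = n)
    ∧ (∑ d ∈ DnD1 n ∪ DnD3 n, d.card) = 2 * n + n * 2 ^ n
    ∧ (∀ d ∈ DnD1 n ∪ DnD3 n, ∀ d' ∈ DnD1 n ∪ DnD3 n, ¬ d ⊂ d') :=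
  ⟨card_DnD1, fun _ => card_of_mem_DnD1, card_DnD3, fun _ => card_of_mem_DnD3,
    sum_card_DnD1_union_DnD3, fun _ hd _ hd' => not_ssubset_of_mem_DnD1_union_DnD3 hn hd hd'⟩
end

section
/- In any finite hypergraph G = (V, E) with all edges non-empty, a vertex t belongs to some maximal independent set and is excluded from some other maximal independent set if and only if t is contained in some edge e with |e| ≥ 2 and {t} is not itself an edge; consequently, if {t} ∈ E then t belongs to no repair, and if t is in no edge then t belongs to every repair. -/
/-!
Every independent subset of `V` extends to a repair, and a fact `t ∈ V` missing from a repair `r`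
lies in an edge contained in `insert t r`. So `t` is in some repair iff `{t}` is independent,
i.e. `{t} ∉ E`; it is missing from some repair iff it lies in an edge `e`, since by minimality
of the edges `e.erase t` is independent and any repair extending it must omit `t`.
-/

variable {F : Type*} [DecidableEq F]

/-- S is independent (consistent): contains no edge. -/
def Independent (E : Finset (Finset F)) (S : Finset F) : Prop :=
  ∀ e ∈ E, ¬ e ⊆ S

/-- S is a repair: a maximal independent subset of V. -/
def IsRepair (V : Finset F) (E : Finset (Finset F)) (S : Finset F) : Prop :=
  S ⊆ V ∧ Independent E S ∧ ∀ S', S ⊂ S' → S' ⊆ V → ¬ Independent E S'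

omit [DecidableEq F] in
lemma independent_singleton {E : Finset (Finset F)} (hE : ∀ e ∈ E, e.Nonempty) {t : F}
    (ht : {t} ∉ E) : Independent E {t} := by
  intro e he het
  rcases Finset.subset_singleton_iff.mp het with rfl | rfl
  exacts [Finset.not_nonempty_empty (hE _ he), ht he]

lemma independent_erase_of_minimal {E : Finset (Finset F)}
    (hmin : ∀ e ∈ E, ∀ e' ∈ E, e ⊆ e' → e = e') {e : Finset F} (he : e ∈ E) (t : F) (ht : t ∈ e) :
    Independent E (e.erase t) := by
  intro e' he' hsub
  obtain rfl := hmin e' he' e he (hsub.trans (e.erase_subset t))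
  exact e'.notMem_erase t (hsub ht)

omit [DecidableEq F] in
lemma isRepair_iff_maximal {V : Finset F} {E : Finset (Finset F)} {S : Finset F} :
    IsRepair V E S ↔ Maximal (fun T => T ⊆ V ∧ Independent E T) S := by
  simp only [IsRepair, maximal_iff_forall_gt, not_and, and_assoc]

omit [DecidableEq F] in
lemma exists_isRepair_superset {V : Finset F} {E : Finset (Finset F)} {S : Finset F}
    (hSV : S ⊆ V) (hS : Independent E S) : ∃ r, IsRepair V E r ∧ S ⊆ r := by
  have hfin : {T : Finset F | T ⊆ V ∧ Independent E T}.Finite :=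
    V.powerset.finite_toSet.subset fun T hT => Finset.mem_powerset.mpr hT.1
  obtain ⟨r, hSr, hr⟩ := hfin.exists_le_maximal (a := S) ⟨hSV, hS⟩
  exact ⟨r, isRepair_iff_maximal.mpr hr, hSr⟩

namespace IsRepair

variable {V : Finset F} {E : Finset (Finset F)} {r : Finset F}

omit [DecidableEq F] in
lemma notMem_of_singleton_mem (hr : IsRepair V E r) {t : F} (ht : {t} ∈ E) : t ∉ r :=
  fun htr => hr.2.1 {t} ht (Finset.singleton_subset_iff.mpr htr)

lemma exists_edge_of_notMem (hr : IsRepair V E r) {t : F} (htV : t ∈ V) (htr : t ∉ r) :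
    ∃ e ∈ E, t ∈ e ∧ e ⊆ insert t r := by
  have hdep := hr.2.2 (insert t r) (Finset.ssubset_insert htr) (Finset.insert_subset htV hr.1)
  simp only [Independent, not_forall, not_not] at hdep
  obtain ⟨e, he, her⟩ := hdep
  refine ⟨e, he, ?_, her⟩
  by_contra hte
  exact hr.2.1 e he ((Finset.subset_insert_iff_of_notMem hte).mp her)

lemma mem_of_forall_notMem (hr : IsRepair V E r) {t : F} (htV : t ∈ V)
    (ht : ∀ e ∈ E, t ∉ e) : t ∈ r := by
  by_contra htr
  obtain ⟨e, he, hte, -⟩ := hr.exists_edge_of_notMem htV htr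
  exact ht e he hte

end IsRepair

theorem stmt19 (V : Finset F) (E : Finset (Finset F))
    (hE : ∀ e ∈ E, e.Nonempty ∧ e ⊆ V)
    (hmin : ∀ e ∈ E, ∀ e' ∈ E, e ⊆ e' → e = e') :
    ∀ t ∈ V,
      (((∃ r : Finset F, IsRepair V E r ∧ t ∈ r) ∧
        (∃ r : Finset F, IsRepair V E r ∧ t ∉ r))
        ↔ ((∃ e ∈ E, t ∈ e ∧ 2 ≤ e.card) ∧ {t} ∉ E))
      ∧ ({t} ∈ E → ∀ r : Finset F, IsRepair V E r → t ∉ r)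
      ∧ ((∀ e ∈ E, t ∉ e) → ∀ r : Finset F, IsRepair V E r → t ∈ r) := by
  intro t ht
  refine ⟨⟨?_, ?_⟩, fun h r hr => hr.notMem_of_singleton_mem h,
    fun h r hr => hr.mem_of_forall_notMem ht h⟩
  · rintro ⟨⟨r, hr, htr⟩, r', hr', htr'⟩
    have hsing : {t} ∉ E := fun h => hr.notMem_of_singleton_mem h htr
    obtain ⟨e, he, hte, -⟩ := hr'.exists_edge_of_notMem ht htr'
    refine ⟨⟨e, he, hte, Finset.one_lt_card_iff_nontrivial.mpr ?_⟩, hsing⟩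
    exact (Finset.nontrivial_iff_ne_singleton hte).mpr fun h => hsing (h ▸ he)
  · rintro ⟨⟨e, he, hte, -⟩, hsing⟩
    obtain ⟨r, hr, htr⟩ := exists_isRepair_superset (Finset.singleton_subset_iff.mpr ht)
      (independent_singleton (fun e he => (hE e he).1) hsing)
    obtain ⟨r', hr', her'⟩ := exists_isRepair_superset
      ((e.erase_subset t).trans (hE e he).2) (independent_erase_of_minimal hmin he t hte)
    refine ⟨⟨r, hr, htr (Finset.mem_singleton_self t)⟩, r', hr', fun htr' => ?_⟩
    exact hr'.2.1 e he (Finset.insert_erase hte ▸ Finset.insert_subset htr' her')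
end
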